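/- (Termination gradient under the interest policy over options.) Consider a finite MDP with options with a fixed interest policy over options π_I, in which the termination functions are parameterized: for each option ω, β_{ω,ν} : ℝ × S → [0,1] with ν ↦ β_{ω,ν}(s) differentiable for every s; write Q_Ω^ν for the corresponding option-value function over options, V_Ω^ν(s) = Σ_ω π_I(ω|s) Q_Ω^ν(s,ω) for the value over options, A_Ω^ν(s,ω) = Q_Ω^ν(s,ω) − V_Ω^ν(s) for the advantage, P₁^ν((s',ω')|(s,ω)) = Σ_a π_ω(a|s) P(s'|s,a) [ (1−β_{ω,ν}(s')) 1{ω'=ω} + β_{ω,ν}(s') π_I(ω'|s') ] for the augmented transition kernel over state-option pairs, and μ̂^ν((s̃,ω̃)|(s,ω)) = Σ_{t=0}^∞ γ^t (P₁^ν)^t((s̃,ω̃)|(s,ω)) for the discounted weighting of state-option pairs along trajectories starting from (s,ω). Then the gradient of the expected discounted return with respect to ν at (s,ω) is: ∂Q_Ω^ν(s,ω)/∂ν = − Σ_{(s̃,ω̃)} μ̂^ν((s̃,ω̃)|(s,ω)) · γ Σ_a π_{ω̃}(a|s̃) Σ_{s'} P(s'|s̃,a) (∂β_{ω̃,ν}(s')/∂ν)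 A_Ω^ν(s',ω̃). -/

import Mathlib

/-!
Stack the option values into a vector `Q` over state-option pairs. The Bellman equations read
`Q = R + γ P₁ Q` with `P₁` row-stochastic, so `‖γ P₁‖ < 1` in the `L∞` operator norm and
`Q = (1 - γ P₁)⁻¹ R`, where `(1 - γ P₁)⁻¹ = ∑ γᵗ P₁ᵗ` is the discounted weighting `μ̂`.
Since `P₁` is affine in the termination probabilities, differentiating the resolvent gives
`∂Q = γ μ̂ (∂P₁) Q`, and `((∂P₁) Q)(s̃, ω̃) = ∑ₐ π ∑_{s'} P ∂β (V_Ω - Q_Ω)`: terminating trades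
the value of continuing `ω̃` for the value over options.
-/

open Matrix
open scoped Matrix.Norms.Operator

namespace Matrix

variable {ι : Type*} [Fintype ι] [DecidableEq ι]

theorem linfty_opNorm_le_one_of_mem_rowStochastic {M : Matrix ι ι ℝ}
    (hM : M ∈ rowStochastic ℝ ι) : ‖M‖ ≤ 1 := by
  rw [linfty_opNorm_def, NNReal.coe_le_one]
  refine Finset.sup_le fun i _ => le_of_eq ?_
  rw [← NNReal.coe_inj, NNReal.coe_sum, NNReal.coe_one, ← sum_row_of_mem_rowStochastic hM i]
  exact Finset.sum_congr rfl fun j _ => Real.norm_of_nonneg (nonneg_of_mem_rowStochastic hM)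

theorem norm_smul_lt_one_of_mem_rowStochastic {M : Matrix ι ι ℝ} {γ : ℝ} (hγ0 : 0 ≤ γ)
    (hγ1 : γ < 1) (hM : M ∈ rowStochastic ℝ ι) : ‖γ • M‖ < 1 := by
  rw [norm_smul, Real.norm_of_nonneg hγ0]
  nlinarith [linfty_opNorm_le_one_of_mem_rowStochastic hM, norm_nonneg M]

theorem inverse_one_sub_smul_apply {M : Matrix ι ι ℝ} {γ : ℝ} (h : ‖γ • M‖ < 1) (i j : ι) :
    Ring.inverse (1 - γ • M) i j = ∑' t : ℕ, γ ^ t * (M ^ t) i j := by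
  have hgeom := hasSum_geom_series_inverse _ h
  have hsum : HasSum (fun t : ℕ => ((γ • M) ^ t) i j) (Ring.inverse (1 - γ • M) i j) :=
    Pi.hasSum.mp (Pi.hasSum.mp hgeom i) j
  simp only [smul_pow, Matrix.smul_apply, smul_eq_mul] at hsum
  exact hsum.tsum_eq.symm

theorem eq_inverse_one_sub_smul_mulVec {M : Matrix ι ι ℝ} {γ : ℝ} {R Q : ι → ℝ}
    (h : ‖γ • M‖ < 1) (hQ : Q = R + γ • (M *ᵥ Q)) : Q = Ring.inverse (1 - γ • M) *ᵥ R := by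
  have hR : (1 - γ • M) *ᵥ Q = R := by
    rw [sub_mulVec, one_mulVec, smul_mulVec]
    nth_rw 1 [hQ]
    abel
  rw [← hR, mulVec_mulVec, Ring.inverse_mul_cancel _ (isUnit_one_sub_of_norm_lt_one h),
    one_mulVec]

theorem hasDerivAt_of_eq_add_smul_mulVec {M : ℝ → Matrix ι ι ℝ} {M' : Matrix ι ι ℝ}
    {R : ι → ℝ} {Q : ℝ → ι → ℝ} {γ ν : ℝ} (hM : ∀ ν, ‖γ • M ν‖ < 1)
    (hQ : ∀ ν, Q ν = R + γ • (M ν *ᵥ Q ν)) (hM' : HasDerivAt M M' ν) :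
    HasDerivAt Q (γ • (Ring.inverse (1 - γ • M ν) *ᵥ (M' *ᵥ Q ν))) ν := by
  set G := Ring.inverse (1 - γ • M ν)
  have hG : HasDerivAt (fun ν => Ring.inverse (1 - γ • M ν)) (γ • (G * M' * G)) ν := by
    have h := (hasFDerivAt_ringInverse (𝕜 := ℝ) (Units.oneSub _ (hM ν))).comp_hasDerivAt ν
      ((hasDerivAt_const ν 1).sub (hM'.const_smul γ))
    rw [← NormedRing.inverse_one_sub _ (hM ν)] at h
    refine h.congr_deriv ?_
    simp [G]
  let evalR : Matrix ι ι ℝ →L[ℝ] ι → ℝ := LinearMap.toContinuousLinearMap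
    { toFun := fun A => A *ᵥ R, map_add' := fun A B => add_mulVec A B R,
      map_smul' := fun c A => smul_mulVec c A R }
  have hQ' : Q = fun ν => Ring.inverse (1 - γ • M ν) *ᵥ R :=
    funext fun ν => eq_inverse_one_sub_smul_mulVec (hM ν) (hQ ν)
  rw [hQ']
  refine (evalR.hasFDerivAt.comp_hasDerivAt ν hG).congr_deriv ?_
  change (γ • (G * M' * G)) *ᵥ R = γ • (G *ᵥ (M' *ᵥ (G *ᵥ R)))
  rw [smul_mulVec, mulVec_mulVec, mulVec_mulVec, Matrix.mul_assoc]

end Matrix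

section OptionKernel

variable {S A Ω : Type*} [Fintype A] [DecidableEq Ω]
  (π : Ω → S → A → ℝ) (P : S → A → S → ℝ) (πI : S → Ω → ℝ)

/-- The augmented kernel `P₁^ν` of the paper, with `β = β_{·,ν}`. -/
def optionKernel (β : Ω → S → ℝ) : Matrix (S × Ω) (S × Ω) ℝ :=
  Matrix.of fun x y => ∑ a, π x.2 x.1 a * P x.1 a y.1 *
    ((1 - β x.2 y.1) * (if y.2 = x.2 then 1 else 0) + β x.2 y.1 * πI y.1 y.2)

def terminationKernel : (Ω → S → ℝ) →ₗ[ℝ] Matrix (S × Ω) (S × Ω) ℝ where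
  toFun β := Matrix.of fun x y => ∑ a, π x.2 x.1 a * P x.1 a y.1 *
    (β x.2 y.1 * (πI y.1 y.2 - if y.2 = x.2 then 1 else 0))
  map_add' β β' := by
    ext x y
    simp only [Matrix.of_apply, Matrix.add_apply, Pi.add_apply, ← Finset.sum_add_distrib]
    exact Finset.sum_congr rfl fun a _ => by ring
  map_smul' c β := by
    ext x y
    simp only [Matrix.of_apply, Matrix.smul_apply, Pi.smul_apply, smul_eq_mul,
      RingHom.id_apply, Finset.mul_sum]
    exact Finset.sum_congr rfl fun a _ => by ring

theorem optionKernel_eq_add_terminationKernel (β : Ω → S → ℝ) :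
    optionKernel π P πI β = optionKernel π P πI 0 + terminationKernel π P πI β := by
  ext x y
  simp only [optionKernel, terminationKernel, LinearMap.coe_mk, AddHom.coe_mk, Matrix.of_apply,
    Matrix.add_apply, Pi.zero_apply, ← Finset.sum_add_distrib]
  exact Finset.sum_congr rfl fun a _ => by ring

variable [Fintype S] [Fintype Ω]

theorem optionKernel_mulVec (β : Ω → S → ℝ) (q : S × Ω → ℝ) (x : S × Ω) :
    (optionKernel π P πI β *ᵥ q) x = ∑ a, π x.2 x.1 a * ∑ s', P x.1 a s' *
      ((1 - β x.2 s') * q (s', x.2) + β x.2 s' * ∑ ω', πI s' ω' * q (s', ω')) := by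
  simp only [Matrix.mulVec, dotProduct, optionKernel, Matrix.of_apply, Fintype.sum_prod_type,
    Finset.sum_mul, Finset.mul_sum]
  conv_rhs => rw [Finset.sum_comm]
  refine Finset.sum_congr rfl fun s' _ => ?_
  rw [Finset.sum_comm]
  refine Finset.sum_congr rfl fun a _ => ?_
  simp only [mul_add, add_mul, Finset.sum_add_distrib, mul_ite, ite_mul, mul_one, mul_zero,
    zero_mul, Finset.sum_ite_eq', Finset.mem_univ, if_true, Finset.mul_sum]
  congr 1
  · ring
  · exact Finset.sum_congr rfl fun ω' _ => by ring

theorem terminationKernel_mulVec (β : Ω → S → ℝ) (q : S × Ω → ℝ) (x : S × Ω) :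
    (terminationKernel π P πI β *ᵥ q) x = -∑ a, π x.2 x.1 a * ∑ s', P x.1 a s' *
      (β x.2 s' * (q (s', x.2) - ∑ ω', πI s' ω' * q (s', ω'))) := by
  have h := congrFun (congrArg (fun M : Matrix (S × Ω) (S × Ω) ℝ => M *ᵥ q)
    (optionKernel_eq_add_terminationKernel π P πI β)) x
  simp only [Matrix.add_mulVec, Pi.add_apply, optionKernel_mulVec] at h
  rw [eq_sub_of_add_eq' h.symm, ← Finset.sum_neg_distrib, ← Finset.sum_sub_distrib]
  refine Finset.sum_congr rfl fun a _ => ?_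
  rw [← mul_neg, ← mul_sub, ← Finset.sum_neg_distrib, ← Finset.sum_sub_distrib]
  congr 1
  exact Finset.sum_congr rfl fun s' _ => by simp only [Pi.zero_apply]; ring

theorem optionKernel_mem_rowStochastic [DecidableEq S] {β : Ω → S → ℝ}
    (hπ0 : ∀ ω s a, 0 ≤ π ω s a) (hπ1 : ∀ ω s, ∑ a, π ω s a = 1)
    (hP0 : ∀ s a s', 0 ≤ P s a s') (hP1 : ∀ s a, ∑ s', P s a s' = 1)
    (hπI0 : ∀ s ω, 0 ≤ πI s ω) (hπI1 : ∀ s, ∑ ω, πI s ω = 1)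
    (hβ0 : ∀ ω s, 0 ≤ β ω s) (hβ1 : ∀ ω s, β ω s ≤ 1) :
    optionKernel π P πI β ∈ Matrix.rowStochastic ℝ (S × Ω) := by
  refine Matrix.mem_rowStochastic.mpr ⟨fun x y => ?_, funext fun x => ?_⟩
  · refine Finset.sum_nonneg fun a _ => mul_nonneg (mul_nonneg (hπ0 _ _ _) (hP0 _ _ _)) ?_
    have hδ : (0 : ℝ) ≤ if y.2 = x.2 then 1 else 0 := by split_ifs <;> norm_num
    exact add_nonneg (mul_nonneg (sub_nonneg.mpr (hβ1 _ _)) hδ)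
      (mul_nonneg (hβ0 _ _) (hπI0 _ _))
  · simp only [optionKernel_mulVec, Pi.one_apply, mul_one, hπI1, sub_add_cancel, hP1, hπ1]

theorem optionValue_eq_add_smul_optionKernel_mulVec {r : S → A → ℝ} {γ : ℝ} {β : Ω → S → ℝ}
    {QU : S → Ω → A → ℝ} {QΩ : S → Ω → ℝ}
    (hQΩ : ∀ s ω, QΩ s ω = ∑ a, π ω s a * QU s ω a)
    (hQU : ∀ s ω a, QU s ω a = r s a + γ * ∑ s', P s a s' *
      ((1 - β ω s') * QΩ s' ω + β ω s' * ∑ ω', πI s' ω' * QΩ s' ω')) :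
    (fun x : S × Ω => QΩ x.1 x.2) = (fun x => ∑ a, π x.2 x.1 a * r x.1 a) +
      γ • (optionKernel π P πI β *ᵥ fun x => QΩ x.1 x.2) := by
  funext x
  rw [hQΩ, Pi.add_apply, Pi.smul_apply, smul_eq_mul, optionKernel_mulVec, Finset.mul_sum,
    ← Finset.sum_add_distrib]
  exact Finset.sum_congr rfl fun a _ => by rw [hQU]; ring

theorem hasDerivAt_optionKernel {β : ℝ → Ω → S → ℝ} {β' : Ω → S → ℝ} {ν : ℝ}
    (hβ : ∀ ω s, HasDerivAt (fun ν => β ν ω s) (β' ω s) ν) :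
    HasDerivAt (fun ν => optionKernel π P πI (β ν)) (terminationKernel π P πI β') ν := by
  simp only [optionKernel_eq_add_terminationKernel π P πI (β _)]
  refine HasDerivAt.const_add _ ?_
  exact (terminationKernel π P πI).toContinuousLinearMap.hasFDerivAt.comp_hasDerivAt ν
    (hasDerivAt_pi.mpr fun ω => hasDerivAt_pi.mpr (hβ ω))

end OptionKernel

theorem termination_gradient_under_interest_policy_general
    {S A Ω : Type*} [Fintype S] [Fintype A] [Fintype Ω]
    [DecidableEq S] [DecidableEq Ω]
    (r : S → A → ℝ) (P : S → A → S → ℝ)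
    (hP0 : ∀ s a s', 0 ≤ P s a s') (hP1 : ∀ s a, ∑ s', P s a s' = 1)
    (γ : ℝ) (hγ0 : 0 ≤ γ) (hγ1 : γ < 1)
    (π : Ω → S → A → ℝ)
    (hπ0 : ∀ ω s a, 0 ≤ π ω s a) (hπ1 : ∀ ω s, ∑ a, π ω s a = 1)
    (β : ℝ → Ω → S → ℝ)
    (hβdiff : ∀ ω s, Differentiable ℝ (fun ν => β ν ω s))
    (hβ0 : ∀ ν ω s, 0 ≤ β ν ω s) (hβ1 : ∀ ν ω s, β ν ω s ≤ 1)
    (πΩ : S → Ω → ℝ)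
    (hπΩ0 : ∀ s ω, 0 ≤ πΩ s ω)
    (I : S → Ω → ℝ) (hI0 : ∀ s ω, 0 ≤ I s ω)
    (hIpos : ∀ s, 0 < ∑ ω, I s ω * πΩ s ω)
    (πI : S → Ω → ℝ)
    (hπI : ∀ s ω, πI s ω = I s ω * πΩ s ω / ∑ ω', I s ω' * πΩ s ω')
    (QU : ℝ → S → Ω → A → ℝ) (QΩ : ℝ → S → Ω → ℝ)
    (hQΩ : ∀ ν s ω, QΩ ν s ω = ∑ a, π ω s a * QU ν s ω a)
    (hQU : ∀ ν s ω a, QU ν s ω a = r s a + γ * ∑ s', P s a s' *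
      ((1 - β ν ω s') * QΩ ν s' ω + β ν ω s' * ∑ ω', πI s' ω' * QΩ ν s' ω'))
    (VΩ : ℝ → S → ℝ)
    (hVΩ : ∀ ν s, VΩ ν s = ∑ ω, πI s ω * QΩ ν s ω)
    (P₁ : ℝ → Matrix (S × Ω) (S × Ω) ℝ)
    (hP₁ : ∀ ν s ω s' ω', P₁ ν (s, ω) (s', ω') =
      ∑ a, π ω s a * P s a s' *
        ((1 - β ν ω s') * (if ω' = ω then 1 else 0) + β ν ω s' * πI s' ω')) :
    ∀ ν s ω,
      deriv (fun ν => QΩ ν s ω) ν =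
        - ∑ x : S × Ω, (∑' t : ℕ, γ ^ t * (P₁ ν ^ t) (s, ω) x) *
          (γ * ∑ a, π x.2 x.1 a * ∑ s', P x.1 a s' *
            (deriv (fun ν => β ν x.2 s') ν * (QΩ ν s' x.2 - VΩ ν s'))) := by
  intro ν s ω
  have hπI0 : ∀ s ω, 0 ≤ πI s ω := fun s ω => by
    rw [hπI]; exact div_nonneg (mul_nonneg (hI0 s ω) (hπΩ0 s ω)) (hIpos s).le
  have hπI1 : ∀ s, ∑ ω, πI s ω = 1 := fun s => by
    simp only [hπI, ← Finset.sum_div, div_self (hIpos s).ne']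
  have hP₁eq : P₁ = fun ν => optionKernel π P πI (β ν) :=
    funext fun ν => Matrix.ext fun x y => hP₁ ν x.1 x.2 y.1 y.2
  subst hP₁eq
  have hnorm : ∀ ν, ‖γ • optionKernel π P πI (β ν)‖ < 1 := fun ν =>
    Matrix.norm_smul_lt_one_of_mem_rowStochastic hγ0 hγ1 <| optionKernel_mem_rowStochastic
      π P πI hπ0 hπ1 hP0 hP1 hπI0 hπI1 (hβ0 ν) (hβ1 ν)
  have hQ := Matrix.hasDerivAt_of_eq_add_smul_mulVec hnorm
    (fun ν => optionValue_eq_add_smul_optionKernel_mulVec π P πI (hQΩ ν) (hQU ν))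
    (hasDerivAt_optionKernel π P πI fun ω s => (hβdiff ω s ν).hasDerivAt)
  rw [(hasDerivAt_pi.mp hQ (s, ω)).deriv, Pi.smul_apply, smul_eq_mul, Matrix.mulVec, dotProduct,
    Finset.mul_sum, ← Finset.sum_neg_distrib]
  refine Finset.sum_congr rfl fun x _ => ?_
  rw [Matrix.inverse_one_sub_smul_apply (hnorm ν), terminationKernel_mulVec]
  simp only [hVΩ]
  ring

/-- **termination gradient under the interest policy over options.**
With a fixed interest policy over options `πI` and termination functions parameterized by
`ν`, the gradient of the expected discounted return with respect to `ν` at `(s,ω)` is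
`− Σ_{(s̃,ω̃)} μ̂^ν((s̃,ω̃)|(s,ω)) · γ Σ_a π_ω̃(a|s̃) Σ_{s'} P(s'|s̃,a)
  (∂β_{ω̃,ν}(s')/∂ν) A_Ω^ν(s',ω̃)`, where `A_Ω^ν(s,ω) = Q_Ω^ν(s,ω) − V_Ω^ν(s)` and
`V_Ω^ν(s) = Σ_ω π_I(ω|s) Q_Ω^ν(s,ω)`. -/
theorem termination_gradient_under_interest_policy
    {S A Ω : Type*} [Fintype S] [Fintype A] [Fintype Ω]
    [DecidableEq S] [DecidableEq A] [DecidableEq Ω]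
    [Nonempty S] [Nonempty A] [Nonempty Ω]
    (r : S → A → ℝ) (P : S → A → S → ℝ)
    (hP0 : ∀ s a s', 0 ≤ P s a s') (hP1 : ∀ s a, ∑ s', P s a s' = 1)
    (γ : ℝ) (hγ0 : 0 ≤ γ) (hγ1 : γ < 1)
    (π : Ω → S → A → ℝ)
    (hπ0 : ∀ ω s a, 0 ≤ π ω s a) (hπ1 : ∀ ω s, ∑ a, π ω s a = 1)
    (β : ℝ → Ω → S → ℝ)
    (hβdiff : ∀ ω s, Differentiable ℝ (fun ν => β ν ω s))
    (hβ0 : ∀ ν ω s, 0 ≤ β ν ω s) (hβ1 : ∀ ν ω s, β ν ω s ≤ 1)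
    (πΩ : S → Ω → ℝ)
    (hπΩ0 : ∀ s ω, 0 ≤ πΩ s ω) (hπΩ1 : ∀ s, ∑ ω, πΩ s ω = 1)
    (I : S → Ω → ℝ) (hI0 : ∀ s ω, 0 ≤ I s ω)
    (hIpos : ∀ s, 0 < ∑ ω, I s ω * πΩ s ω)
    (πI : S → Ω → ℝ)
    (hπI : ∀ s ω, πI s ω = I s ω * πΩ s ω / ∑ ω', I s ω' * πΩ s ω')
    (QU : ℝ → S → Ω → A → ℝ) (QΩ : ℝ → S → Ω → ℝ)
    (hQΩ : ∀ ν s ω, QΩ ν s ω = ∑ a, π ω s a * QU ν s ω a)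
    (hQU : ∀ ν s ω a, QU ν s ω a = r s a + γ * ∑ s', P s a s' *
      ((1 - β ν ω s') * QΩ ν s' ω + β ν ω s' * ∑ ω', πI s' ω' * QΩ ν s' ω'))
    (VΩ : ℝ → S → ℝ)
    (hVΩ : ∀ ν s, VΩ ν s = ∑ ω, πI s ω * QΩ ν s ω)
    (P₁ : ℝ → Matrix (S × Ω) (S × Ω) ℝ)
    (hP₁ : ∀ ν s ω s' ω', P₁ ν (s, ω) (s', ω') =
      ∑ a, π ω s a * P s a s' *
        ((1 - β ν ω s') * (if ω' = ω then 1 else 0) + β ν ω s' * πI s' ω')) :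
    ∀ ν s ω,
      deriv (fun ν => QΩ ν s ω) ν =
        - ∑ x : S × Ω, (∑' t : ℕ, γ ^ t * (P₁ ν ^ t) (s, ω) x) *
          (γ * ∑ a, π x.2 x.1 a * ∑ s', P x.1 a s' *
            (deriv (fun ν => β ν x.2 s') ν * (QΩ ν s' x.2 - VΩ ν s'))) :=
  termination_gradient_under_interest_policy_general r P hP0 hP1 γ hγ0 hγ1 π hπ0 hπ1 β hβdiff hβ0
    hβ1 πΩ hπΩ0 I hI0 hIpos πI hπI QU QΩ hQΩ hQU VΩ hVΩ P₁ hP₁
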